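/- (Theorem 2) Fix α ∈ (0, 1) with (1 − α)/(1 + α) < √α and cell parameterization data W₀, H₀ > 0, b_x, b_y ∈ ℝ, i, j, m, n ∈ ℤ. Viewing the IoU of the two parameterized boxes b₁, b₂ as a function of the fractional-offset vector (i₁, j₁, m₁, n₁, i₂, j₂, m₂, n₂) ∈ [−1/2, 1/2]⁸, this function attains a minimum over the cube [−1/2, 1/2]⁸, and the minimum is attained at some vertex of the cube, i.e., at a point all of whose eight coordinates equal −1/2 or 1/2. -/

import Mathlib

/-- Intersection area of two axis-aligned boxes given as (w, h, x, y):
the rectangle [x - w/2, x + w/2] × [y - h/2, y + h/2]. -/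
noncomputable def interArea (w₁ h₁ x₁ y₁ w₂ h₂ x₂ y₂ : ℝ) : ℝ :=
  max 0 (min (x₁ + w₁ / 2) (x₂ + w₂ / 2) - max (x₁ - w₁ / 2) (x₂ - w₂ / 2)) *
    max 0 (min (y₁ + h₁ / 2) (y₂ + h₂ / 2) - max (y₁ - h₁ / 2) (y₂ - h₂ / 2))

/-- Intersection over union of two axis-aligned boxes. -/
noncomputable def iou (w₁ h₁ x₁ y₁ w₂ h₂ x₂ y₂ : ℝ) : ℝ :=
  interArea w₁ h₁ x₁ y₁ w₂ h₂ x₂ y₂ /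
    (w₁ * h₁ + w₂ * h₂ - interArea w₁ h₁ x₁ y₁ w₂ h₂ x₂ y₂)
/-- Width (resp. height) of the k-th box in the cell parameterization:
w_k = W₀ / α^(i + i_k), with a real exponent (Real.rpow). -/
noncomputable def cellW (α W₀ : ℝ) (i : ℤ) (ik : ℝ) : ℝ := W₀ / α ^ ((i : ℝ) + ik)

/-- Offset partition spacing δ_i = (W₀ / α^i) · (1 − α)/(1 + α). -/
noncomputable def cellDelta (α W₀ : ℝ) (i : ℤ) : ℝ := W₀ / α ^ i * ((1 - α) / (1 + α))

/-- Offset of the k-th box in the cell parameterization: x_k = (b_x + m + m_k)·δ_i. -/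
noncomputable def cellX (α W₀ bX : ℝ) (i m : ℤ) (mk : ℝ) : ℝ :=
  (bX + (m : ℝ) + mk) * cellDelta α W₀ i

/-- IoU of the two boxes b₁, b₂ given by the cell parameterization with data
(α, W₀, H₀, b_x, b_y, i, j, m, n) and fractional offsets (i₁, j₁, m₁, n₁), (i₂, j₂, m₂, n₂). -/
noncomputable def cellIoU (α W₀ H₀ bX bY : ℝ) (i j m n : ℤ)
    (i₁ j₁ m₁ n₁ i₂ j₂ m₂ n₂ : ℝ) : ℝ :=
  iou (cellW α W₀ i i₁) (cellW α H₀ j j₁) (cellX α W₀ bX i m m₁) (cellX α H₀ bY j n n₁)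
      (cellW α W₀ i i₂) (cellW α H₀ j j₂) (cellX α W₀ bX i m m₂) (cellX α H₀ bY j n n₂)

/-!
Each of the eight offsets moves one width or one centre of one box, monotonically. With the
other data fixed, the IoU is `I / (S - I)`, where `S` (the sum of the areas) is affine in that
width or centre and `I` is the positive part of the overlap length along that axis, times a
constant. The overlap length `min (x + w/2) r - max (x - w/2) l` is concave, so every
superlevel set `{r ≤ IoU}` is convex. Hence the IoU is quasiconcave in each offset
separately, and such a function on a cube is minimised at a vertex: moving the coordinates of
any point one at a time to the better endpoint never increases the value.
-/

open Set Function

theorem QuasiconcaveOn.exists_endpoint_le {f : ℝ → ℝ} {a b x : ℝ}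
    (hf : QuasiconcaveOn ℝ (Icc a b) f) (hx : x ∈ Icc a b) :
    ∃ e, (e = a ∨ e = b) ∧ f e ≤ f x := by
  have hab : a ≤ b := hx.1.trans hx.2
  have hmin : min (f a) (f b) ≤ f x :=
    ((hf _).ordConnected.out ⟨left_mem_Icc.2 hab, min_le_left _ _⟩
      ⟨right_mem_Icc.2 hab, min_le_right _ _⟩ hx).2
  rcases min_le_iff.1 hmin with h | h
  exacts [⟨a, .inl rfl, h⟩, ⟨b, .inr rfl, h⟩]

theorem QuasiconcaveOn.comp_monotoneOn {f φ : ℝ → ℝ} {s t : Set ℝ}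
    (hf : QuasiconcaveOn ℝ t f) (hs : Convex ℝ s) (hφ : MonotoneOn φ s) (hst : MapsTo φ s t) :
    QuasiconcaveOn ℝ s (f ∘ φ) := by
  intro r
  refine convex_iff_ordConnected.2 ⟨fun x hx y hy z hz => ?_⟩
  have hzs : z ∈ s := hs.ordConnected.out hx.1 hy.1 hz
  exact ⟨hzs, ((hf r).ordConnected.out ⟨hst hx.1, hx.2⟩ ⟨hst hy.1, hy.2⟩
    ⟨hφ hx.1 hzs hz.1, hφ hzs hy.1 hz.2⟩).2⟩

theorem ConcaveOn.min_sub_max {E : Type*} [AddCommGroup E] [Module ℝ E] {s : Set E} {R L : E → ℝ}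
    (hR : ConcaveOn ℝ s R) (hL : ConvexOn ℝ s L) (r l : ℝ) :
    ConcaveOn ℝ s fun x => min (R x) r - max (L x) l :=
  (hR.inf (concaveOn_const r hR.1)).sub (hL.sup (convexOn_const l hL.1))

theorem concaveOn_mul_add {s : Set ℝ} (hs : Convex ℝ s) (a b : ℝ) :
    ConcaveOn ℝ s fun t => a * t + b :=
  ((LinearMap.mulLeft ℝ a).concaveOn hs).add_const b

theorem convexOn_mul_add {s : Set ℝ} (hs : Convex ℝ s) (a b : ℝ) :
    ConvexOn ℝ s fun t => a * t + b :=
  ((LinearMap.mulLeft ℝ a).convexOn hs).add_const b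

theorem ConcaveOn.quasiconcaveOn_posPart_mul_div_sub {E : Type*} [AddCommGroup E] [Module ℝ E]
    {s : Set E} {T S : E → ℝ} {c : ℝ} (hT : ConcaveOn ℝ s T) (hS : ConvexOn ℝ s S) (hc : 0 ≤ c)
    (hlt : ∀ x ∈ s, max 0 (T x) * c < S x) :
    QuasiconcaveOn ℝ s fun x => max 0 (T x) * c / (S x - max 0 (T x) * c) := by
  intro r
  rcases le_or_gt r 0 with hr | hr
  · convert hT.1 using 1
    refine sep_eq_self_iff_mem_true.2 fun x hx => hr.trans (div_nonneg ?_ ?_)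
    · positivity
    · linarith [hlt x hx]
  -- for `r > 0`, `r ≤ I / (S - I)` forces `T x > 0`, so `max 0` drops out
  · have hconc : ConcaveOn ℝ s fun x => (1 + r) * c * T x - r * S x :=
      (hT.smul (by positivity : 0 ≤ (1 + r) * c)).sub (hS.smul hr.le)
    convert hconc.convex_ge 0 using 1
    refine sep_ext_iff.2 fun x hx => ?_
    have hS := hlt x hx
    rw [le_div_iff₀ (by linarith)]
    rcases le_total 0 (T x) with hT0 | hT0
    · rw [max_eq_right hT0] at hS ⊢
      constructor <;> intro h <;> nlinarith
    · rw [max_eq_left hT0] at hS ⊢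
      constructor <;> intro h <;> nlinarith [mul_nonpos_of_nonneg_of_nonpos hc hT0]

section Cube

variable {ι : Type*} [Fintype ι] [DecidableEq ι] {F : (ι → ℝ) → ℝ} {a b : ℝ}

theorem exists_vertex_le_of_quasiconcaveOn_update
    (hF : ∀ q : ι → ℝ, (∀ k, q k ∈ Icc a b) → ∀ k,
      QuasiconcaveOn ℝ (Icc a b) fun t => F (update q k t))
    {q : ι → ℝ} (hq : ∀ k, q k ∈ Icc a b) :
    ∃ p : ι → ℝ, (∀ k, p k = a ∨ p k = b) ∧ F p ≤ F q := by
  suffices h : ∀ K : Finset ι, ∀ q : ι → ℝ, (∀ k, q k ∈ Icc a b) →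
      (∀ k ∉ K, q k = a ∨ q k = b) → ∃ p : ι → ℝ, (∀ k, p k = a ∨ p k = b) ∧ F p ≤ F q from
    h Finset.univ q hq fun k hk => absurd (Finset.mem_univ k) hk
  intro K
  induction K using Finset.induction_on with
  | empty => exact fun q _ hq => ⟨q, fun k => hq k (Finset.notMem_empty k), le_rfl⟩
  | insert k K _ ih =>
    intro q hq hqK
    obtain ⟨e, he, hle⟩ := (hF q hq k).exists_endpoint_le (hq k)
    rw [update_eq_self] at hle
    have hab : a ≤ b := (hq k).1.trans (hq k).2
    obtain ⟨p, hp, hpq⟩ := ih (update q k e)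
      (fun j => by
        rcases eq_or_ne j k with rfl | hj
        · rcases he with rfl | rfl <;> simp [hab]
        · simpa [hj] using hq j)
      (fun j hj => by
        rcases eq_or_ne j k with rfl | hjk
        · simpa using he
        · simpa [hjk] using hqK j (by simp [hjk, hj]))
    exact ⟨p, hp, hpq.trans hle⟩

theorem exists_vertex_forall_le_of_quasiconcaveOn_update
    (hF : ∀ q : ι → ℝ, (∀ k, q k ∈ Icc a b) → ∀ k,
      QuasiconcaveOn ℝ (Icc a b) fun t => F (update q k t)) :
    ∃ p : ι → ℝ, (∀ k, p k = a ∨ p k = b) ∧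
      ∀ q : ι → ℝ, (∀ k, q k ∈ Icc a b) → F p ≤ F q := by
  obtain ⟨p, hp, hmin⟩ := exists_min_image {p : ι → ℝ | ∀ k, p k = a ∨ p k = b} F
    (Finite.pi' fun _ => toFinite {a, b}) ⟨fun _ => a, fun _ => .inl rfl⟩
  refine ⟨p, hp, fun q hq => ?_⟩
  obtain ⟨p', hp', hle⟩ := exists_vertex_le_of_quasiconcaveOn_update hF hq
  exact (hmin p' hp').trans hle

end Cube

noncomputable def overlapLen (x₁ w₁ x₂ w₂ : ℝ) : ℝ :=
  min (x₁ + w₁ / 2) (x₂ + w₂ / 2) - max (x₁ - w₁ / 2) (x₂ - w₂ / 2)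

theorem concaveOn_overlapLen_center (w₁ x₂ w₂ : ℝ) :
    ConcaveOn ℝ univ fun x => overlapLen x w₁ x₂ w₂ :=
  ((concaveOn_mul_add convex_univ 1 (w₁ / 2)).min_sub_max
    (convexOn_mul_add convex_univ 1 (-(w₁ / 2))) _ _).congr fun x _ => by
      simp only [overlapLen]; ring_nf

theorem concaveOn_overlapLen_width (x₁ x₂ w₂ : ℝ) {s : Set ℝ} (hs : Convex ℝ s) :
    ConcaveOn ℝ s fun w => overlapLen x₁ w x₂ w₂ :=
  ((concaveOn_mul_add hs (1 / 2) x₁).min_sub_max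
    (convexOn_mul_add hs (-(1 / 2)) x₁) _ _).congr fun x _ => by
      simp only [overlapLen]; ring_nf

section Boxes

variable {w₁ h₁ x₁ y₁ w₂ h₂ x₂ y₂ : ℝ}

theorem interArea_eq_overlapLen_mul :
    interArea w₁ h₁ x₁ y₁ w₂ h₂ x₂ y₂ =
      max 0 (overlapLen x₁ w₁ x₂ w₂) * max 0 (overlapLen y₁ h₁ y₂ h₂) :=
  rfl

theorem overlapLen_le_left : overlapLen x₁ w₁ x₂ w₂ ≤ w₁ := by
  have := min_le_left (x₁ + w₁ / 2) (x₂ + w₂ / 2)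
  have := le_max_left (x₁ - w₁ / 2) (x₂ - w₂ / 2)
  unfold overlapLen
  linarith

theorem interArea_lt_add (hw₁ : 0 < w₁) (hh₁ : 0 < h₁) (hw₂ : 0 < w₂) (hh₂ : 0 < h₂) :
    interArea w₁ h₁ x₁ y₁ w₂ h₂ x₂ y₂ < w₁ * h₁ + w₂ * h₂ := by
  rw [interArea_eq_overlapLen_mul]
  have : max 0 (overlapLen x₁ w₁ x₂ w₂) * max 0 (overlapLen y₁ h₁ y₂ h₂) ≤ w₁ * h₁ :=
    mul_le_mul (max_le hw₁.le overlapLen_le_left) (max_le hh₁.le overlapLen_le_left)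
      (le_max_left _ _) hw₁.le
  nlinarith [mul_pos hw₂ hh₂]

theorem overlapLen_comm : overlapLen x₁ w₁ x₂ w₂ = overlapLen x₂ w₂ x₁ w₁ := by
  rw [overlapLen, overlapLen, min_comm, max_comm]

theorem iou_comm : iou w₁ h₁ x₁ y₁ w₂ h₂ x₂ y₂ = iou w₂ h₂ x₂ y₂ w₁ h₁ x₁ y₁ := by
  simp only [iou, interArea_eq_overlapLen_mul, overlapLen_comm (x₁ := x₁),
    overlapLen_comm (x₁ := y₁)]
  ring

theorem iou_transpose : iou w₁ h₁ x₁ y₁ w₂ h₂ x₂ y₂ = iou h₁ w₁ y₁ x₁ h₂ w₂ y₂ x₂ := by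
  simp only [iou, interArea_eq_overlapLen_mul]
  ring

theorem iou_quasiconcaveOn_x₁ (hw₁ : 0 < w₁) (hh₁ : 0 < h₁) (hw₂ : 0 < w₂) (hh₂ : 0 < h₂) :
    QuasiconcaveOn ℝ univ fun x => iou w₁ h₁ x y₁ w₂ h₂ x₂ y₂ :=
  (concaveOn_overlapLen_center w₁ x₂ w₂).quasiconcaveOn_posPart_mul_div_sub
    (convexOn_const _ convex_univ) (le_max_left _ _) fun _ _ => interArea_lt_add hw₁ hh₁ hw₂ hh₂

theorem iou_quasiconcaveOn_w₁ (hh₁ : 0 < h₁) (hw₂ : 0 < w₂) (hh₂ : 0 < h₂) :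
    QuasiconcaveOn ℝ (Ioi 0) fun w => iou w h₁ x₁ y₁ w₂ h₂ x₂ y₂ :=
  (concaveOn_overlapLen_width x₁ x₂ w₂ (convex_Ioi 0)).quasiconcaveOn_posPart_mul_div_sub
    ((convexOn_mul_add (convex_Ioi 0) h₁ (w₂ * h₂)).congr fun _ _ => by ring)
    (le_max_left _ _) fun _ hw => interArea_lt_add hw hh₁ hw₂ hh₂

theorem iou_quasiconcaveOn_y₁ (hw₁ : 0 < w₁) (hh₁ : 0 < h₁) (hw₂ : 0 < w₂) (hh₂ : 0 < h₂) :
    QuasiconcaveOn ℝ univ fun y => iou w₁ h₁ x₁ y w₂ h₂ x₂ y₂ := by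
  convert iou_quasiconcaveOn_x₁ hh₁ hw₁ hh₂ hw₂ using 1
  exact funext fun _ => iou_transpose

theorem iou_quasiconcaveOn_h₁ (hw₁ : 0 < w₁) (hw₂ : 0 < w₂) (hh₂ : 0 < h₂) :
    QuasiconcaveOn ℝ (Ioi 0) fun h => iou w₁ h x₁ y₁ w₂ h₂ x₂ y₂ := by
  convert iou_quasiconcaveOn_w₁ hw₁ hh₂ hw₂ using 1
  exact funext fun _ => iou_transpose

end Boxes

section Cells

variable {α W₀ H₀ bX bY : ℝ} {i j m n : ℤ}

theorem cellW_pos (hα0 : 0 < α) (hW₀ : 0 < W₀) (t : ℝ) : 0 < cellW α W₀ i t :=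
  div_pos hW₀ (Real.rpow_pos_of_pos hα0 _)

theorem cellW_monotone (hα0 : 0 < α) (hα1 : α < 1) (hW₀ : 0 < W₀) :
    Monotone (cellW α W₀ i) := fun _ _ h =>
  div_le_div_of_nonneg_left hW₀.le (Real.rpow_pos_of_pos hα0 _)
    (Real.rpow_le_rpow_of_exponent_ge hα0 hα1.le (by linarith))

theorem cellX_monotone (hα0 : 0 < α) (hα1 : α < 1) (hW₀ : 0 < W₀) :
    Monotone (cellX α W₀ bX i m) := fun _ _ h =>
  mul_le_mul_of_nonneg_right (by linarith) <|
    mul_nonneg (div_nonneg hW₀.le (zpow_nonneg hα0.le i)) (div_nonneg (by linarith) (by linarith))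

theorem cellIoU_comm (i₁ j₁ m₁ n₁ i₂ j₂ m₂ n₂ : ℝ) :
    cellIoU α W₀ H₀ bX bY i j m n i₁ j₁ m₁ n₁ i₂ j₂ m₂ n₂ =
      cellIoU α W₀ H₀ bX bY i j m n i₂ j₂ m₂ n₂ i₁ j₁ m₁ n₁ :=
  iou_comm

variable {s : Set ℝ} (hα0 : 0 < α) (hα1 : α < 1) (hW₀ : 0 < W₀) (hH₀ : 0 < H₀) (hs : Convex ℝ s)
  {i₁ j₁ m₁ n₁ i₂ j₂ m₂ n₂ : ℝ}
include hα0 hα1 hW₀ hH₀ hs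

theorem cellIoU_quasiconcaveOn_i₁ :
    QuasiconcaveOn ℝ s fun t => cellIoU α W₀ H₀ bX bY i j m n t j₁ m₁ n₁ i₂ j₂ m₂ n₂ :=
  (iou_quasiconcaveOn_w₁ (cellW_pos hα0 hH₀ _) (cellW_pos hα0 hW₀ _)
    (cellW_pos hα0 hH₀ _)).comp_monotoneOn hs ((cellW_monotone hα0 hα1 hW₀).monotoneOn s)
    fun t _ => cellW_pos hα0 hW₀ t

theorem cellIoU_quasiconcaveOn_j₁ :
    QuasiconcaveOn ℝ s fun t => cellIoU α W₀ H₀ bX bY i j m n i₁ t m₁ n₁ i₂ j₂ m₂ n₂ :=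
  (iou_quasiconcaveOn_h₁ (cellW_pos hα0 hW₀ _) (cellW_pos hα0 hW₀ _)
    (cellW_pos hα0 hH₀ _)).comp_monotoneOn hs ((cellW_monotone hα0 hα1 hH₀).monotoneOn s)
    fun t _ => cellW_pos hα0 hH₀ t

theorem cellIoU_quasiconcaveOn_m₁ :
    QuasiconcaveOn ℝ s fun t => cellIoU α W₀ H₀ bX bY i j m n i₁ j₁ t n₁ i₂ j₂ m₂ n₂ :=
  (iou_quasiconcaveOn_x₁ (cellW_pos hα0 hW₀ _) (cellW_pos hα0 hH₀ _)
    (cellW_pos hα0 hW₀ _) (cellW_pos hα0 hH₀ _)).comp_monotoneOn hs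
    ((cellX_monotone hα0 hα1 hW₀).monotoneOn s) (mapsTo_univ _ _)

theorem cellIoU_quasiconcaveOn_n₁ :
    QuasiconcaveOn ℝ s fun t => cellIoU α W₀ H₀ bX bY i j m n i₁ j₁ m₁ t i₂ j₂ m₂ n₂ :=
  (iou_quasiconcaveOn_y₁ (cellW_pos hα0 hW₀ _) (cellW_pos hα0 hH₀ _)
    (cellW_pos hα0 hW₀ _) (cellW_pos hα0 hH₀ _)).comp_monotoneOn hs
    ((cellX_monotone hα0 hα1 hH₀).monotoneOn s) (mapsTo_univ _ _)

end Cells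

theorem stmt_14_general (α : ℝ) (hα : α ∈ Set.Ioo (0 : ℝ) 1)
    (W₀ H₀ bX bY : ℝ) (hW₀ : 0 < W₀) (hH₀ : 0 < H₀) (i j m n : ℤ) :
    ∃ p : Fin 8 → ℝ, (∀ k, p k = -(1:ℝ)/2 ∨ p k = 1/2) ∧
      ∀ q : Fin 8 → ℝ, (∀ k, q k ∈ Set.Icc (-(1:ℝ)/2) (1/2)) →
        cellIoU α W₀ H₀ bX bY i j m n
            (p 0) (p 1) (p 2) (p 3) (p 4) (p 5) (p 6) (p 7) ≤
          cellIoU α W₀ H₀ bX bY i j m n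
            (q 0) (q 1) (q 2) (q 3) (q 4) (q 5) (q 6) (q 7) := by
  obtain ⟨hα0, hα1⟩ := hα
  have hs : Convex ℝ (Icc (-(1:ℝ)/2) (1/2)) := convex_Icc _ _
  refine exists_vertex_forall_le_of_quasiconcaveOn_update
    (F := fun q => cellIoU α W₀ H₀ bX bY i j m n (q 0) (q 1) (q 2) (q 3) (q 4) (q 5) (q 6) (q 7))
    fun q _ k => ?_
  fin_cases k <;>
    simp only [Fin.zero_eta, Fin.mk_one, Fin.reduceFinMk, Fin.isValue, ne_eq, Fin.reduceEq,
      not_false_eq_true, update_of_ne, update_self]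
  · exact cellIoU_quasiconcaveOn_i₁ hα0 hα1 hW₀ hH₀ hs
  · exact cellIoU_quasiconcaveOn_j₁ hα0 hα1 hW₀ hH₀ hs
  · exact cellIoU_quasiconcaveOn_m₁ hα0 hα1 hW₀ hH₀ hs
  · exact cellIoU_quasiconcaveOn_n₁ hα0 hα1 hW₀ hH₀ hs
  all_goals simp only [cellIoU_comm (i₁ := q 0)]
  · exact cellIoU_quasiconcaveOn_i₁ hα0 hα1 hW₀ hH₀ hs
  · exact cellIoU_quasiconcaveOn_j₁ hα0 hα1 hW₀ hH₀ hs
  · exact cellIoU_quasiconcaveOn_m₁ hα0 hα1 hW₀ hH₀ hs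
  · exact cellIoU_quasiconcaveOn_n₁ hα0 hα1 hW₀ hH₀ hs

theorem stmt_14 (α : ℝ) (hα : α ∈ Set.Ioo (0 : ℝ) 1)
    (hcond : (1 - α) / (1 + α) < Real.sqrt α)
    (W₀ H₀ bX bY : ℝ) (hW₀ : 0 < W₀) (hH₀ : 0 < H₀) (i j m n : ℤ) :
    ∃ p : Fin 8 → ℝ, (∀ k, p k = -(1:ℝ)/2 ∨ p k = 1/2) ∧
      ∀ q : Fin 8 → ℝ, (∀ k, q k ∈ Set.Icc (-(1:ℝ)/2) (1/2)) →
        cellIoU α W₀ H₀ bX bY i j m n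
            (p 0) (p 1) (p 2) (p 3) (p 4) (p 5) (p 6) (p 7) ≤
          cellIoU α W₀ H₀ bX bY i j m n
            (q 0) (q 1) (q 2) (q 3) (q 4) (q 5) (q 6) (q 7) :=
  stmt_14_general α hα W₀ H₀ bX bY hW₀ hH₀ i j m n
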